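/- arXiv:1907.12657 — 4 statements merged into one kernel-verified Lean document; each statement's English description precedes it below -/
import Mathlib

section
/- For nonnegative integers n ≤ m and any x, y: ∑_{k=0}^{n} C(n,k) (-1)^k (xk+y)^m = (-1)^n n! ∑_{j=n}^{m} C(m,j) x^j y^{m-j} S(j,n), where S denotes Stirling numbers of the second kind. -/
/-- Stirling numbers of the second kind. -/
def stirling2 : ℕ → ℕ → ℕ
  | 0, 0 => 1
  | 0, _ + 1 => 0
  | _ + 1, 0 => 0
  | n + 1, k + 1 => stirling2 n k + (k + 1) * stirling2 n (k + 1)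

/-!
Expanding `(x k + y)ᵐ` binomially reduces the identity to the classical formula
`∑ₖ C(n,k) (-1)ᵏ kʲ = (-1)ⁿ n! S(j,n)`, i.e. `n! S(j,n)` is the `n`-th finite difference of
`t ↦ tʲ` at `0`. That formula follows by induction on `j` from the Stirling recurrence, because
both `k C(n+1,k) = (n+1) C(n,k-1)` and Pascal's rule express the alternating sums at level `n + 1`
through the same shifted sum `∑ₖ C(n,k) (-1)ᵏ f(k+1)`.
-/

open Finset

theorem stirling2_eq_stirlingSecond : ∀ j n, stirling2 j n = Nat.stirlingSecond j n
  | 0, 0 | 0, _ + 1 | _ + 1, 0 => rfl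
  | j + 1, n + 1 => by
    rw [stirling2, Nat.stirlingSecond_succ_succ, stirling2_eq_stirlingSecond j n,
      stirling2_eq_stirlingSecond j (n + 1), add_comm]

section AlternatingBinomialSum

variable {R : Type*} [CommRing R] (f : ℕ → R) (n : ℕ)

theorem sum_range_choose_succ_mul_neg_one_pow_mul :
    ∑ k ∈ range (n + 2), ((n + 1).choose k : R) * (-1) ^ k * f k =
      ∑ k ∈ range (n + 1), (n.choose k : R) * (-1) ^ k * f k -
        ∑ k ∈ range (n + 1), (n.choose k : R) * (-1) ^ k * f (k + 1) := by
  have := sum_choose_succ_mul (fun k _ ↦ (-1 : R) ^ k * f k) n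
  simp only [← mul_assoc, pow_succ, mul_neg, neg_mul, mul_one, sum_neg_distrib] at this
  rw [this, sub_eq_add_neg]

theorem sum_range_choose_succ_mul_neg_one_pow_mul_cast_mul :
    ∑ k ∈ range (n + 2), ((n + 1).choose k : R) * (-1) ^ k * (k * f k) =
      -(n + 1) * ∑ k ∈ range (n + 1), (n.choose k : R) * (-1) ^ k * f (k + 1) := by
  rw [sum_range_succ', mul_sum]
  simp only [Nat.cast_zero, zero_mul, mul_zero, add_zero]
  refine sum_congr rfl fun k _ ↦ ?_
  have h : ((n + 1).choose (k + 1) : R) * (k + 1) = (n + 1) * n.choose k := by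
    exact_mod_cast congrArg (Nat.cast : ℕ → R) (Nat.add_one_mul_choose_eq n k).symm
  push_cast
  linear_combination (-1) ^ (k + 1) * f (k + 1) * h

end AlternatingBinomialSum

theorem sum_range_choose_mul_neg_one_pow_mul_pow {R : Type*} [CommRing R] (j n : ℕ) :
    ∑ k ∈ range (n + 1), (n.choose k : R) * (-1) ^ k * (k : R) ^ j =
      (-1) ^ n * n.factorial * Nat.stirlingSecond j n := by
  induction j generalizing n with
  | zero =>
    have h := congrArg (Int.cast : ℤ → R) (Int.alternating_sum_range_choose (n := n))
    push_cast at h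
    rcases n with _ | n <;> simp_all [mul_comm]
  | succ j ih =>
    cases n with
    | zero => simp
    | succ n =>
      have hA := sum_range_choose_succ_mul_neg_one_pow_mul_cast_mul (fun k ↦ (k : R) ^ j) n
      have hB := sum_range_choose_succ_mul_neg_one_pow_mul (fun k ↦ (k : R) ^ j) n
      simp only [← pow_succ'] at hA
      have ih' := ih (n + 1)
      push_cast [Nat.stirlingSecond_succ_succ, Nat.factorial_succ] at ih' ⊢
      linear_combination hA - (n + 1) * hB + (n + 1) * ih' - (n + 1) * ih n

theorem sum_mul_add_pow_eq_sum_choose {R : Type*} [CommSemiring R] (c : ℕ → R) (s : Finset ℕ)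
    (m : ℕ) (x y : R) :
    ∑ k ∈ s, c k * (x * k + y) ^ m =
      ∑ j ∈ range (m + 1), (m.choose j : R) * x ^ j * y ^ (m - j) * ∑ k ∈ s, c k * (k : R) ^ j := by
  simp only [add_pow, mul_sum]
  rw [sum_comm]
  exact sum_congr rfl fun j _ ↦ sum_congr rfl fun k _ ↦ by ring

theorem sum_range_mul_stirlingSecond_eq_sum_Icc {R : Type*} [Semiring R] (g : ℕ → R) (n m : ℕ) :
    ∑ j ∈ range (m + 1), g j * Nat.stirlingSecond j n =
      ∑ j ∈ Icc n m, g j * Nat.stirlingSecond j n := by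
  refine (sum_subset (fun j hj ↦ ?_) fun j hj hj' ↦ ?_).symm
  · simpa [Nat.lt_succ_iff] using (mem_Icc.mp hj).2
  · have hjn : j < n := by simp_all
    simp [Nat.stirlingSecond_eq_zero_of_lt hjn]

theorem sum_binom_neg_pow_eq_stirling_general {R : Type*} [CommRing R] (n m : ℕ)
    (x y : R) :
    ∑ k ∈ Finset.range (n + 1), (n.choose k : R) * (-1) ^ k * (x * k + y) ^ m =
      (-1) ^ n * (n.factorial : R) *
        ∑ j ∈ Finset.Icc n m, (m.choose j : R) * x ^ j * y ^ (m - j) * (stirling2 j n : R) := by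
  simp only [stirling2_eq_stirlingSecond]
  rw [sum_mul_add_pow_eq_sum_choose, ← sum_range_mul_stirlingSecond_eq_sum_Icc, mul_sum]
  refine sum_congr rfl fun j _ ↦ ?_
  rw [sum_range_choose_mul_neg_one_pow_mul_pow]
  ring

theorem sum_binom_neg_pow_eq_stirling {R : Type*} [CommRing R] (n m : ℕ) (h : n ≤ m)
    (x y : R) :
    ∑ k ∈ Finset.range (n + 1), (n.choose k : R) * (-1) ^ k * (x * k + y) ^ m =
      (-1) ^ n * (n.factorial : R) *
        ∑ j ∈ Finset.Icc n m, (m.choose j : R) * x ^ j * y ^ (m - j) * (stirling2 j n : R) :=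
  sum_binom_neg_pow_eq_stirling_general n m x y
end

section
/- For all (k1,k2) ∈ ℤ²_{≥0} and ℓ ≥ 0: ∑_{0≤i≤k1, 0≤j≤k2} binom(k1,i)·binom(k2,j)·i!·j!·C(i,j,ℓ) = (k1·x + k2·y + z)^ℓ, as polynomials in ℤ[x,y,z]. -/
open MvPolynomial in
/-- The polynomial `C(k1,k2,ℓ) = ∑_{i1 ≥ k1, i2 ≥ k2, i1+i2 ≤ ℓ}
binom(ℓ,i1) binom(ℓ-i1,i2) S(i1,k1) S(i2,k2) x^{i1} y^{i2} z^{ℓ-i1-i2}` in `ℤ[x,y,z]`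
(the conditions `i1 ≥ k1`, `i2 ≥ k2` are automatic since `S(i,k) = 0` for `i < k`). -/
noncomputable def Cpoly (k1 k2 l : ℕ) : MvPolynomial (Fin 3) ℤ :=
  ∑ i1 ∈ Finset.range (l + 1), ∑ i2 ∈ Finset.range (l + 1 - i1),
    (MvPolynomial.C ((l.choose i1 * (l - i1).choose i2
        * stirling2 i1 k1 * stirling2 i2 k2 : ℕ) : ℤ)) *
      X 0 ^ i1 * X 1 ^ i2 * X 2 ^ (l - i1 - i2)

open MvPolynomial in
/-- `A_{ij} = i·x + j·y + z`. -/
noncomputable def Apoly (i j : ℕ) : MvPolynomial (Fin 3) ℤ :=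
  (i : MvPolynomial (Fin 3) ℤ) * X 0 + (j : MvPolynomial (Fin 3) ℤ) * X 1 + X 2

open Finset Nat

theorem stirling2_eq_stirlingSecond_s7 : stirling2 = stirlingSecond := by
  funext n k
  induction n generalizing k with
  | zero => cases k <;> rfl
  | succ n ih => cases k <;> simp [stirling2, stirlingSecond_succ_succ, ih, add_comm]

section

open Polynomial

theorem X_mul_descPochhammer {R : Type*} [CommRing R] (i : ℕ) :
    X * descPochhammer R i = descPochhammer R (i + 1) + (i : R[X]) * descPochhammer R i := by
  rw [descPochhammer_succ_right]; ring

theorem sum_stirlingSecond_mul_descPochhammer {R : Type*} [CommRing R] (n : ℕ) :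
    ∑ i ∈ range (n + 1), (stirlingSecond n i : R[X]) * descPochhammer R i = X ^ n := by
  induction n with
  | zero => simp
  | succ n ih =>
    have hshift : ∑ i ∈ range (n + 1), (stirlingSecond n i : R[X]) * (i * descPochhammer R i) =
        ∑ i ∈ range (n + 1),
          ((i + 1 : ℕ) * stirlingSecond n (i + 1) : R[X]) * descPochhammer R (i + 1) := by
      rw [sum_range_succ', sum_range_succ, stirlingSecond_eq_zero_of_lt (lt_add_one n)]
      simp only [cast_zero, zero_mul, mul_zero, add_zero, mul_left_comm, mul_assoc]
    calc ∑ i ∈ range (n + 1 + 1), (stirlingSecond (n + 1) i : R[X]) * descPochhammer R i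
        = ∑ i ∈ range (n + 1), ((stirlingSecond n i : R[X]) * descPochhammer R (i + 1) +
            ((i + 1 : ℕ) * stirlingSecond n (i + 1) : R[X]) * descPochhammer R (i + 1)) := by
          rw [sum_range_succ', stirlingSecond_succ_zero, cast_zero, zero_mul, add_zero]
          refine sum_congr rfl fun i _ => ?_
          rw [stirlingSecond_succ_succ]
          push_cast
          ring
      _ = ∑ i ∈ range (n + 1),
            (stirlingSecond n i : R[X]) * (descPochhammer R (i + 1) + i * descPochhammer R i) := by
          simp only [mul_add, sum_add_distrib, hshift]
      _ = X ^ (n + 1) := by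
          rw [_root_.pow_succ', ← ih, mul_sum]
          exact sum_congr rfl fun i _ => by rw [mul_left_comm, X_mul_descPochhammer]

theorem sum_choose_mul_factorial_mul_stirlingSecond (n k : ℕ) :
    ∑ i ∈ range (k + 1), k.choose i * i ! * stirlingSecond n i = k ^ n := by
  have hpoly := congrArg (eval (k : ℤ)) (sum_stirlingSecond_mul_descPochhammer (R := ℤ) n)
  simp only [eval_finsetSum, eval_mul, eval_natCast, descPochhammer_eval_eq_descFactorial,
    eval_pow, eval_X] at hpoly
  have hdesc : ∑ i ∈ range (n + 1), stirlingSecond n i * k.descFactorial i = k ^ n := by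
    exact_mod_cast hpoly
  calc ∑ i ∈ range (k + 1), k.choose i * i ! * stirlingSecond n i
      = ∑ i ∈ range (k + 1), stirlingSecond n i * k.descFactorial i :=
        sum_congr rfl fun i _ => by rw [descFactorial_eq_factorial_mul_choose]; ring
    _ = ∑ i ∈ range (n + k + 1), stirlingSecond n i * k.descFactorial i := by
        refine sum_subset (range_subset_range.2 (by omega)) fun i _ hi => ?_
        rw [descFactorial_eq_zero_iff_lt.2 (by simpa using hi), mul_zero]
    _ = ∑ i ∈ range (n + 1), stirlingSecond n i * k.descFactorial i := by
        refine (sum_subset (range_subset_range.2 (by omega)) fun i _ hi => ?_).symm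
        rw [stirlingSecond_eq_zero_of_lt (by simpa using hi), zero_mul]
    _ = k ^ n := hdesc

end

theorem add_add_pow {R : Type*} [CommSemiring R] (u v w : R) (l : ℕ) :
    (u + v + w) ^ l = ∑ i1 ∈ range (l + 1), ∑ i2 ∈ range (l + 1 - i1),
      (l.choose i1 * (l - i1).choose i2 : ℕ) * u ^ i1 * v ^ i2 * w ^ (l - i1 - i2) := by
  rw [add_assoc, add_pow]
  refine sum_congr rfl fun i1 hi1 => ?_
  rw [add_pow, show l - i1 + 1 = l + 1 - i1 by grind, mul_sum, sum_mul]
  refine sum_congr rfl fun i2 _ => ?_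
  rw [Nat.sub_sub]
  push_cast
  ring

open MvPolynomial in
theorem sum_sum_C_mul_Cpoly (s t : Finset ℕ) (a b : ℕ → ℕ) (l : ℕ) :
    ∑ i ∈ s, ∑ j ∈ t, C ((a i * b j : ℕ) : ℤ) * Cpoly i j l =
      ∑ i1 ∈ range (l + 1), ∑ i2 ∈ range (l + 1 - i1),
        C ((l.choose i1 * (l - i1).choose i2 * (∑ i ∈ s, a i * stirling2 i1 i)
          * (∑ j ∈ t, b j * stirling2 i2 j) : ℕ) : ℤ) *
          X 0 ^ i1 * X 1 ^ i2 * X 2 ^ (l - i1 - i2) := by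
  conv_lhs => simp only [Cpoly, mul_sum]; rw [← sum_product', sum_comm]
  refine sum_congr rfl fun i1 _ => ?_
  rw [sum_comm]
  refine sum_congr rfl fun i2 _ => ?_
  rw [sum_product]
  simp only [Nat.cast_mul, Nat.cast_sum, map_mul, map_sum, mul_sum, sum_mul]
  conv_rhs => rw [sum_comm]
  refine sum_congr rfl fun i _ => sum_congr rfl fun j _ => ?_
  ring

theorem sum_desc_Cpoly_eq_Apoly_pow (k1 k2 l : ℕ) :
    ∑ i ∈ Finset.range (k1 + 1), ∑ j ∈ Finset.range (k2 + 1),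
        (MvPolynomial.C ((k1.choose i * k2.choose j * i.factorial * j.factorial : ℕ) : ℤ))
          * Cpoly i j l =
      Apoly k1 k2 ^ l := by
  have hweight : ∀ i j, k1.choose i * k2.choose j * i ! * j ! =
      (k1.choose i * i !) * (k2.choose j * j !) := fun _ _ => by ring
  simp only [hweight, sum_sum_C_mul_Cpoly, stirling2_eq_stirlingSecond_s7,
    sum_choose_mul_factorial_mul_stirlingSecond]
  rw [Apoly, add_add_pow]
  refine sum_congr rfl fun i1 _ => sum_congr rfl fun i2 _ => ?_
  simp only [Nat.cast_mul, Nat.cast_pow, map_mul, map_pow, map_natCast]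
  ring
end

section
/- Let R be a finite downward-closed set of r ≥ 1 points in ℤ²_{≥0}, and let ℓ ≥ r. For any multiplicities n_{ij} > 0 with ∑_{(i,j)∈R} n_{ij} = ℓ, the coefficients a = (a_0,…,a_{ℓ-1}) of the polynomial b_a(s) = ∏_{(i,j)∈R}(s - (ix+jy+z))^{n_{ij}} = s^ℓ + a_{ℓ-1}s^{ℓ-1} + ⋯ + a_0 satisfy, for every (k1,k2) ∈ R: ∑_{n=0}^{ℓ} C(k1,k2,n)·a_n = 0 in ℤ[x,y,z], where a_ℓ := 1. -/
/-- A finite set `R ⊆ ℤ²_{≥0}` satisfies the monomial condition iff it is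
downward closed. -/
def MonomialCondition (R : Finset (ℕ × ℕ)) : Prop :=
  ∀ p ∈ R, ∀ q : ℕ × ℕ, q.1 ≤ p.1 → q.2 ≤ p.2 → q ∈ R

/-!
With `Δ` the forward difference of step `1`, the explicit formula for Stirling numbers reads
`Δ^k (r ↦ r^i) (0) = k! S(i,k)`: both sides satisfy the recurrence of `S`, because
`Δ^(k+1) (r ↦ r f(r)) (0) = (k+1) Δ^k f (1)`. Expanding `(a x + c y + z)^m` by the binomial
theorem twice then gives `k1! k2! C(k1,k2,m) = Δ_c^k2 Δ_a^k1 (a x + c y + z)^m` at `a = c = 0`.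
Pairing with the coefficients of `b`, the sum in question times `k1! k2!` becomes
`Δ_c^k2 Δ_a^k1 b(a x + c y + z)` at `0`, a combination of the values `b(A_{j1 j2})` with
`j1 ≤ k1`, `j2 ≤ k2`. These all vanish because `R` is downward closed, and `ℤ[x,y,z]` has no
`ℕ`-torsion.
-/

open Finset fwdDiff

section
variable {M G : Type*} [AddCommMonoid M] [AddCommGroup G]

theorem fwdDiff_iter_apply_add (h : M) (f : M → G) (k : ℕ) (y : M) :
    Δ_[h] ^[k] f (y + h) = Δ_[h] ^[k] f y + Δ_[h] ^[k + 1] f y := by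
  rw [Function.iterate_succ_apply', fwdDiff]
  abel

theorem fwdDiff_iter_eq_zero_of_forall_shift_eq_zero (h : M) (f : M → G) (k : ℕ) (y : M)
    (hf : ∀ j ≤ k, f (y + j • h) = 0) : Δ_[h] ^[k] f y = 0 := by
  rw [fwdDiff_iter_eq_sum_shift]
  exact sum_eq_zero fun j hj => by rw [hf j (Nat.lt_succ_iff.mp (mem_range.mp hj)), smul_zero]

end

section
variable {R : Type*} [CommRing R]

theorem fwdDiff_iter_sum_mul_apply {ι M : Type*} [AddCommMonoid M] (h : M) (s : Finset ι)
    (c : ι → R) (g : ι → M → R) (k : ℕ) (y : M) :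
    Δ_[h] ^[k] (fun r => ∑ i ∈ s, c i * g i r) y = ∑ i ∈ s, c i * Δ_[h] ^[k] (g i) y := by
  simp only [fwdDiff_iter_eq_sum_shift, smul_sum, mul_sum]
  rw [sum_comm]
  exact sum_congr rfl fun i _ => sum_congr rfl fun j _ => (mul_smul_comm _ _ _).symm

theorem fwdDiff_iter_succ_mul_apply_zero (f : R → R) (k : ℕ) :
    Δ_[1] ^[k + 1] (fun r => r * f r) 0 = (k + 1) * Δ_[1] ^[k] f 1 := by
  simp only [fwdDiff_iter_eq_sum_shift, zero_add, mul_sum]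
  rw [sum_range_succ']
  simp only [zero_smul, zero_mul, smul_zero, add_zero, nsmul_eq_mul, mul_one]
  refine sum_congr rfl fun j _ => ?_
  have hchoose : ((k + 1).choose (j + 1) : R) * (j + 1) = (k + 1) * k.choose j := by
    simpa using congrArg (Nat.cast : ℕ → R) (Nat.add_one_mul_choose_eq k j).symm
  rw [Nat.add_sub_add_right, zsmul_eq_mul, zsmul_eq_mul, add_comm 1]
  push_cast
  linear_combination (-1 : R) ^ (k - j) * f (j + 1) * hchoose

theorem fwdDiff_iter_pow_apply_zero (i k : ℕ) :
    Δ_[1] ^[k] (fun r : R => r ^ i) 0 = k.factorial * stirling2 i k := by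
  induction i generalizing k with
  | zero =>
    cases k with
    | zero => simp [stirling2]
    | succ k =>
      have hconst : Δ_[(1 : R)] (fun _ : R => (0 : R)) = fun _ => 0 := fwdDiff_const 1 0
      simp [Function.iterate_succ_apply, Function.iterate_fixed hconst, stirling2]
  | succ i ih =>
    cases k with
    | zero => simp [stirling2]
    | succ k =>
      have hshift := fwdDiff_iter_apply_add (1 : R) (fun r => r ^ i) k 0
      rw [zero_add] at hshift
      simp only [pow_succ']
      rw [fwdDiff_iter_succ_mul_apply_zero, hshift, ih, ih, stirling2, Nat.factorial_succ]
      push_cast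
      ring

theorem fwdDiff_iter_mul_add_pow_apply_zero (x w : R) (k m : ℕ) :
    Δ_[1] ^[k] (fun a => (a * x + w) ^ m) 0 =
      ∑ i ∈ range (m + 1),
        (k.factorial * stirling2 i k * m.choose i : R) * x ^ i * w ^ (m - i) := by
  have hexpand : (fun a => (a * x + w) ^ m) =
      fun a => ∑ i ∈ range (m + 1), (x ^ i * w ^ (m - i) * m.choose i) * a ^ i := by
    ext a
    rw [add_pow]
    exact sum_congr rfl fun i _ => by ring
  rw [hexpand, fwdDiff_iter_sum_mul_apply]
  exact sum_congr rfl fun i _ => by rw [fwdDiff_iter_pow_apply_zero]; ring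

end

open MvPolynomial

theorem natCast_factorial_mul_Cpoly_eq_fwdDiff_iter (k1 k2 m : ℕ) :
    ((k1.factorial * k2.factorial : ℕ) : MvPolynomial (Fin 3) ℤ) * Cpoly k1 k2 m =
      Δ_[1] ^[k2] (fun c => Δ_[1] ^[k1] (fun a => (a * X 0 + (c * X 1 + X 2)) ^ m) 0) 0 := by
  simp_rw [fwdDiff_iter_mul_add_pow_apply_zero]
  rw [fwdDiff_iter_sum_mul_apply]
  simp_rw [fwdDiff_iter_mul_add_pow_apply_zero]
  rw [Cpoly, mul_sum]
  refine sum_congr rfl fun i1 hi1 => ?_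
  rw [show m + 1 - i1 = m - i1 + 1 by have := mem_range.mp hi1; omega, mul_sum, mul_sum]
  refine sum_congr rfl fun i2 _ => ?_
  simp only [map_natCast]
  push_cast
  ring

theorem system_solution_with_multiplicities_general (R : Finset (ℕ × ℕ))
    (hR : MonomialCondition R) (l : ℕ)
    (n : ℕ × ℕ → ℕ) (hn : ∀ p ∈ R, 0 < n p) (hsum : ∑ p ∈ R, n p = l)
    (b : Polynomial (MvPolynomial (Fin 3) ℤ))
    (hb : b = ∏ p ∈ R, (Polynomial.X - Polynomial.C (Apoly p.1 p.2)) ^ n p) :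
    ∀ p ∈ R, ∑ m ∈ Finset.range (l + 1), Cpoly p.1 p.2 m * b.coeff m = 0 := by
  rintro ⟨k1, k2⟩ hp
  have hdeg : b.natDegree < l + 1 := by
    rw [hb, Polynomial.natDegree_prod_of_monic _ _
      fun q _ => (Polynomial.monic_X_sub_C _).pow _]
    simp [hsum]
  have hroot : ∀ j1 ≤ k1, ∀ j2 ≤ k2, b.eval (Apoly j1 j2) = 0 := fun j1 h1 j2 h2 => by
    have hmem := hR _ hp (j1, j2) h1 h2
    rw [hb, Polynomial.eval_prod]
    exact prod_eq_zero hmem (by simp [(hn _ hmem).ne'])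
  have hdiff : Δ_[1] ^[k2] (fun c => Δ_[1] ^[k1]
      (fun a => b.eval (a * X 0 + (c * X 1 + X 2))) 0) 0 = 0 :=
    fwdDiff_iter_eq_zero_of_forall_shift_eq_zero _ _ _ _ fun j2 h2 =>
      fwdDiff_iter_eq_zero_of_forall_shift_eq_zero _ _ _ _ fun j1 h1 => by
        simpa [Apoly, add_assoc] using hroot j1 h1 j2 h2
  simp only [Polynomial.eval_eq_sum_range' hdeg, fwdDiff_iter_sum_mul_apply,
    ← natCast_factorial_mul_Cpoly_eq_fwdDiff_iter, mul_left_comm (b.coeff _), ← mul_sum] at hdiff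
  have hfact : ((k1.factorial * k2.factorial : ℕ) : MvPolynomial (Fin 3) ℤ) ≠ 0 :=
    Nat.cast_ne_zero.mpr (Nat.mul_ne_zero (Nat.factorial_ne_zero _) (Nat.factorial_ne_zero _))
  simpa only [mul_comm (b.coeff _)] using (mul_eq_zero.mp hdiff).resolve_left hfact

theorem system_solution_with_multiplicities (R : Finset (ℕ × ℕ))
    (hR : MonomialCondition R) (hr : 1 ≤ R.card) (l : ℕ) (hl : R.card ≤ l)
    (n : ℕ × ℕ → ℕ) (hn : ∀ p ∈ R, 0 < n p) (hsum : ∑ p ∈ R, n p = l)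
    (b : Polynomial (MvPolynomial (Fin 3) ℤ))
    (hb : b = ∏ p ∈ R, (Polynomial.X - Polynomial.C (Apoly p.1 p.2)) ^ n p) :
    ∀ p ∈ R, ∑ m ∈ Finset.range (l + 1), Cpoly p.1 p.2 m * b.coeff m = 0 :=
  system_solution_with_multiplicities_general R hR l n hn hsum b hb
end

section
/- For every positive integer a, every natural number k1 and every natural number ℓ ≥ 1: ∑_{j=1}^{a} (a!/(a-j)!)·binom(k1+j, k1)·S(ℓ, k1+j) = ∑_{i=k1}^{ℓ-1} binom(ℓ, i)·S(i, k1)·a^{ℓ-i}, where S denotes Stirling numbers of the second kind. -/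
open Finset in
lemma stirling2_succ (n k : ℕ) :
    stirling2 (n+1) (k+1) = stirling2 n k + (k + 1) * stirling2 n (k + 1) := rfl

open Finset in
lemma stirling2_eq_zero_of_lt : ∀ n k, n < k → stirling2 n k = 0 := by
  intro n
  induction n with
  | zero => intro k hk; cases k with
    | zero => omega
    | succ k => rfl
  | succ n ih =>
    intro k hk
    cases k with
    | zero => omega
    | succ k =>
      rw [stirling2_succ, ih k (by omega), ih (k+1) (by omega)]; ring

open Finset in
lemma desc_mul (a j : ℕ) :
    a.descFactorial j * a = a.descFactorial (j+1) + j * a.descFactorial j := by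
  rcases le_or_gt j a with h | h
  · rw [Nat.descFactorial_succ]
    nlinarith [Nat.sub_add_cancel h]
  · rw [Nat.descFactorial_eq_zero_iff_lt.2 h,
      Nat.descFactorial_eq_zero_iff_lt.2 (by omega)]; ring

open Finset in
lemma pow_eq_sum (a n : ℕ) :
    a ^ n = ∑ j ∈ range (n+1), stirling2 n j * a.descFactorial j := by
  induction n with
  | zero => simp [stirling2]
  | succ n ih =>
    have h1 : a ^ (n+1) = ∑ j ∈ range (n+1),
        (stirling2 n j * a.descFactorial (j+1) + j * stirling2 n j * a.descFactorial j) := by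
      rw [pow_succ, ih, Finset.sum_mul]
      refine Finset.sum_congr rfl fun j _ => ?_
      rw [mul_assoc, desc_mul]; ring
    rw [h1, Finset.sum_add_distrib]
    rw [Finset.sum_range_succ' (fun j => stirling2 (n+1) j * a.descFactorial j) (n+1)]
    have h0 : stirling2 (n+1) 0 * a.descFactorial 0 = 0 := by simp [stirling2]
    rw [h0, add_zero]
    have h2 : ∀ j, stirling2 (n+1) (j+1) * a.descFactorial (j+1)
        = stirling2 n j * a.descFactorial (j+1)
          + (j+1) * stirling2 n (j+1) * a.descFactorial (j+1) := by
      intro j; rw [stirling2_succ]; ring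
    simp only [h2]
    rw [Finset.sum_add_distrib]
    congr 1
    rw [Finset.sum_range_succ' (fun j => j * stirling2 n j * a.descFactorial j) n]
    rw [Finset.sum_range_succ (fun j => (j+1) * stirling2 n (j+1) * a.descFactorial (j+1)) n]
    rw [stirling2_eq_zero_of_lt n (n+1) (by omega)]
    simp

open Finset in
lemma conv : ∀ l k1 j : ℕ,
    ∑ i ∈ range (l+1), l.choose i * stirling2 i k1 * stirling2 (l - i) j
      = (k1 + j).choose k1 * stirling2 l (k1 + j) := by
  intro l
  induction l with
  | zero => intro k1 j; rcases k1 with _|k1 <;> rcases j with _|j <;> simp [stirling2]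
  | succ l ih =>
    intro k1 j
    have key : ∑ i ∈ range (l+1+1), (l+1).choose i * stirling2 i k1 * stirling2 (l+1-i) j
        = (∑ i ∈ range (l+1), l.choose i * stirling2 (i+1) k1 * stirling2 (l-i) j)
          + ∑ i ∈ range (l+1), l.choose i * stirling2 i k1 * stirling2 (l-i+1) j := by
      rw [Finset.sum_range_succ'
        (fun i => (l+1).choose i * stirling2 i k1 * stirling2 (l+1-i) j) (l+1)]
      have e1 : ∀ i ∈ range (l+1),
          (l+1).choose (i+1) * stirling2 (i+1) k1 * stirling2 (l+1-(i+1)) j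
          = l.choose i * stirling2 (i+1) k1 * stirling2 (l-i) j
            + l.choose (i+1) * stirling2 (i+1) k1 * stirling2 (l-i) j := by
        intro i hi
        rw [Nat.choose_succ_succ, Nat.succ_sub_succ]; ring
      rw [Finset.sum_congr rfl e1, Finset.sum_add_distrib]
      have e2 : (∑ i ∈ range (l+1), l.choose (i+1) * stirling2 (i+1) k1 * stirling2 (l-i) j)
          + (l+1).choose 0 * stirling2 0 k1 * stirling2 (l+1-0) j
          = ∑ i ∈ range (l+1), l.choose i * stirling2 i k1 * stirling2 (l-i+1) j := by
        have e3 : ∑ i ∈ range (l+2), l.choose i * stirling2 i k1 * stirling2 (l+1-i) j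
            = (∑ i ∈ range (l+1), l.choose (i+1) * stirling2 (i+1) k1 * stirling2 (l-i) j)
              + (l+1).choose 0 * stirling2 0 k1 * stirling2 (l+1-0) j := by
          rw [Finset.sum_range_succ'
            (fun i => l.choose i * stirling2 i k1 * stirling2 (l+1-i) j) (l+1)]
          congr 1
          · refine Finset.sum_congr rfl fun i hi => ?_
            rw [Nat.succ_sub_succ]
          · simp
        have e4 : ∑ i ∈ range (l+2), l.choose i * stirling2 i k1 * stirling2 (l+1-i) j
            = ∑ i ∈ range (l+1), l.choose i * stirling2 i k1 * stirling2 (l-i+1) j := by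
          rw [Finset.sum_range_succ]
          rw [Nat.choose_eq_zero_of_lt (by omega)]
          simp only [zero_mul, add_zero]
          refine Finset.sum_congr rfl fun i hi => ?_
          simp only [mem_range] at hi
          congr 2
          omega
        rw [← e3, e4]
      rw [add_assoc, e2]
    rw [key]
    rcases k1 with _|k <;> rcases j with _|j'
    · -- k1 = 0, j = 0
      simp only [Nat.zero_add, Nat.choose_self]
      have h1 : ∀ i ∈ range (l+1), (l:ℕ).choose i * stirling2 (i+1) 0 * stirling2 (l-i) 0 = 0 := by
        intro i hi; simp [stirling2]
      have h2 : ∀ i ∈ range (l+1), (l:ℕ).choose i * stirling2 i 0 * stirling2 (l-i+1) 0 = 0 := by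
        intro i hi; simp [stirling2]
      rw [Finset.sum_congr rfl h1, Finset.sum_congr rfl h2]
      simp [stirling2]
    · -- k1 = 0, j = j'+1
      have h1 : ∀ i ∈ range (l+1), (l:ℕ).choose i * stirling2 (i+1) 0 * stirling2 (l-i) (j'+1) = 0 := by
        intro i hi; simp [stirling2]
      rw [Finset.sum_congr rfl h1, Finset.sum_const_zero, zero_add]
      have h2 : ∀ i ∈ range (l+1), (l:ℕ).choose i * stirling2 i 0 * stirling2 (l-i+1) (j'+1)
          = l.choose i * stirling2 i 0 * stirling2 (l-i) j'
            + (j'+1) * (l.choose i * stirling2 i 0 * stirling2 (l-i) (j'+1)) := by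
        intro i hi; rw [stirling2_succ]; ring
      rw [Finset.sum_congr rfl h2, Finset.sum_add_distrib, ← Finset.mul_sum, ih, ih]
      simp only [Nat.zero_add, Nat.choose_zero_right, stirling2_succ]
      ring
    · -- k1 = k+1, j = 0
      have h2 : ∀ i ∈ range (l+1), (l:ℕ).choose i * stirling2 i (k+1) * stirling2 (l-i+1) 0 = 0 := by
        intro i hi; simp [stirling2]
      rw [Finset.sum_congr rfl h2, Finset.sum_const_zero, add_zero]
      have h1 : ∀ i ∈ range (l+1), (l:ℕ).choose i * stirling2 (i+1) (k+1) * stirling2 (l-i) 0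
          = l.choose i * stirling2 i k * stirling2 (l-i) 0
            + (k+1) * (l.choose i * stirling2 i (k+1) * stirling2 (l-i) 0) := by
        intro i hi; rw [stirling2_succ]; ring
      rw [Finset.sum_congr rfl h1, Finset.sum_add_distrib, ← Finset.mul_sum, ih, ih]
      simp only [Nat.add_zero, Nat.choose_self, stirling2_succ]
      ring
    · -- k1 = k+1, j = j'+1
      have h1 : ∀ i ∈ range (l+1), (l:ℕ).choose i * stirling2 (i+1) (k+1) * stirling2 (l-i) (j'+1)
          = l.choose i * stirling2 i k * stirling2 (l-i) (j'+1)
            + (k+1) * (l.choose i * stirling2 i (k+1) * stirling2 (l-i) (j'+1)) := by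
        intro i hi; rw [stirling2_succ]; ring
      have h2 : ∀ i ∈ range (l+1), (l:ℕ).choose i * stirling2 i (k+1) * stirling2 (l-i+1) (j'+1)
          = l.choose i * stirling2 i (k+1) * stirling2 (l-i) j'
            + (j'+1) * (l.choose i * stirling2 i (k+1) * stirling2 (l-i) (j'+1)) := by
        intro i hi; rw [stirling2_succ]; ring
      rw [Finset.sum_congr rfl h1, Finset.sum_congr rfl h2,
        Finset.sum_add_distrib, Finset.sum_add_distrib,
        ← Finset.mul_sum, ← Finset.mul_sum, ih, ih, ih]
      have hk : k + (j'+1) = (k+1) + j' := by omega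
      have hs : k + 1 + (j' + 1) = (k + j' + 1) + 1 := by omega
      rw [hk, hs, stirling2_succ]
      have hpascal : (k + j' + 1 + 1).choose (k+1)
          = (k + j' + 1).choose k + (k + j' + 1).choose (k+1) := Nat.choose_succ_succ _ _
      have e5 : k + 1 + j' = k + j' + 1 := by omega
      rw [e5, hpascal]
      ring

open Finset in
lemma stirling2_zero_of_pos : ∀ n, 0 < n → stirling2 n 0 = 0 := by
  intro n hn
  cases n with
  | zero => omega
  | succ n => rfl

open Finset in
theorem stirling2_desc_sum (a : ℕ) (ha : 0 < a) (k1 l : ℕ) (hl : 1 ≤ l) :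
    ∑ j ∈ Finset.Icc 1 a, a.descFactorial j * (k1 + j).choose k1 * stirling2 l (k1 + j) =
      ∑ i ∈ Finset.Icc k1 (l - 1), l.choose i * stirling2 i k1 * a ^ (l - i) := by
  set N := a + l with hN
  have hLHS : ∑ j ∈ Finset.Icc 1 a, a.descFactorial j * (k1 + j).choose k1 * stirling2 l (k1 + j)
      = ∑ j ∈ Finset.Icc 1 N, a.descFactorial j * (k1 + j).choose k1 * stirling2 l (k1 + j) := by
    apply Finset.sum_subset
    · apply Finset.Icc_subset_Icc_right; omega
    · intro x hx hx'
      simp only [mem_Icc] at hx hx'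
      rw [Nat.descFactorial_eq_zero_iff_lt.2 (by omega)]
      ring
  have hpow : ∀ i ∈ Finset.Icc k1 (l-1),
      a ^ (l - i) = ∑ j ∈ Finset.Icc 1 N, stirling2 (l-i) j * a.descFactorial j := by
    intro i hi
    simp only [mem_Icc] at hi
    rw [pow_eq_sum a (l-i)]
    have h1 : ∑ j ∈ range (l-i+1), stirling2 (l-i) j * a.descFactorial j
        = ∑ j ∈ range (N+1), stirling2 (l-i) j * a.descFactorial j := by
      apply Finset.sum_subset
      · apply Finset.range_subset_range.2; omega
      · intro x hx hx'
        simp only [mem_range] at hx hx'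
        rw [stirling2_eq_zero_of_lt (l-i) x (by omega)]
        ring
    have h2 : ∑ j ∈ Finset.Icc 1 N, stirling2 (l-i) j * a.descFactorial j
        = ∑ j ∈ range (N+1), stirling2 (l-i) j * a.descFactorial j := by
      apply Finset.sum_subset
      · intro x hx
        simp only [mem_Icc] at hx
        simp only [mem_range]; omega
      · intro x hx hx'
        simp only [mem_range] at hx
        simp only [mem_Icc] at hx'
        have hx0 : x = 0 := by omega
        subst hx0
        rw [stirling2_zero_of_pos (l-i) (by omega)]
        ring
    rw [h1, ← h2]
  have hinner : ∀ j ∈ Finset.Icc 1 N,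
      ∑ i ∈ Finset.Icc k1 (l-1), l.choose i * stirling2 i k1 * stirling2 (l - i) j
        = (k1 + j).choose k1 * stirling2 l (k1 + j) := by
    intro j hj
    simp only [mem_Icc] at hj
    rw [← conv l k1 j]
    apply Finset.sum_subset
    · intro x hx
      simp only [mem_Icc] at hx
      simp only [mem_range]; omega
    · intro x hx hx'
      simp only [mem_range] at hx
      simp only [mem_Icc] at hx'
      rcases lt_or_ge x k1 with h | h
      · rw [stirling2_eq_zero_of_lt x k1 h]; ring
      · have hx0 : x = l := by omega
        subst hx0
        rw [Nat.sub_self, stirling2_eq_zero_of_lt 0 j (by omega)]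
        ring
  calc ∑ j ∈ Finset.Icc 1 a, a.descFactorial j * (k1 + j).choose k1 * stirling2 l (k1 + j)
      = ∑ j ∈ Finset.Icc 1 N, a.descFactorial j * (k1 + j).choose k1 * stirling2 l (k1 + j) := hLHS
    _ = ∑ j ∈ Finset.Icc 1 N, a.descFactorial j *
          ∑ i ∈ Finset.Icc k1 (l-1), l.choose i * stirling2 i k1 * stirling2 (l - i) j := by
        refine Finset.sum_congr rfl fun j hj => ?_
        rw [hinner j hj]; ring
    _ = ∑ j ∈ Finset.Icc 1 N, ∑ i ∈ Finset.Icc k1 (l-1),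
          l.choose i * stirling2 i k1 * (stirling2 (l - i) j * a.descFactorial j) := by
        refine Finset.sum_congr rfl fun j hj => ?_
        rw [Finset.mul_sum]
        refine Finset.sum_congr rfl fun i hi => ?_
        ring
    _ = ∑ i ∈ Finset.Icc k1 (l-1), ∑ j ∈ Finset.Icc 1 N,
          l.choose i * stirling2 i k1 * (stirling2 (l - i) j * a.descFactorial j) :=
        Finset.sum_comm
    _ = ∑ i ∈ Finset.Icc k1 (l-1), l.choose i * stirling2 i k1 * a ^ (l - i) := by
        refine Finset.sum_congr rfl fun i hi => ?_
        rw [← Finset.mul_sum, ← hpow i hi]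
end
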